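/- A ℤ-invariant valued abelian group G is maximal if and only if it is pseudo-complete. -/

import Mathlib

universe u

/-- `v : G → Γ` is a valuation making the abelian group `G` a valued abelian group:
`Γ` is a linear order with greatest element `⊤` (denoted `∞` in the paper), `v` is
surjective, `v g = ⊤` iff `g = 0`, and `v (g - h) ≥ min (v g) (v h)`. -/
structure IsValuedGroup {G Γ : Type*} [AddCommGroup G] [LinearOrder Γ] [OrderTop Γ]
    (v : G → Γ) : Prop where
  surjective : Function.Surjective v
  eq_top_iff : ∀ g : G, v g = ⊤ ↔ g = 0
  min_le_sub : ∀ g h : G, min (v g) (v h) ≤ v (g - h)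

/-- A sequence `a` indexed by a linearly ordered set `I` is pseudo-Cauchy if eventually
`v (a i - a j) < v (a j - a k)` for `i < j < k`. -/
def IsPseudoCauchy {G Γ I : Type*} [AddCommGroup G] [LinearOrder Γ] [LinearOrder I]
    (v : G → Γ) (a : I → G) : Prop :=
  ∃ i₀ : I, ∀ i j k : I, i₀ ≤ i → i < j → j < k → v (a i - a j) < v (a j - a k)

/-- `x` is a pseudo-limit of the sequence `a` if eventually
`v (a i - x) = v (a i - a j)` for `i < j`. -/
def IsPseudoLimit {G Γ I : Type*} [AddCommGroup G] [LinearOrder Γ] [LinearOrder I]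
    (v : G → Γ) (a : I → G) (x : G) : Prop :=
  ∃ i₀ : I, ∀ i j : I, i₀ ≤ i → i < j → v (a i - x) = v (a i - a j)

/-- For subsets `G ⊆ K` of an ambient valued abelian group `(H, v)`, `K` is an immediate
extension of `G` (both regarded as valued groups via restriction of `v`): the nonzero
values of `K` and of `G` coincide, and for every value `γ` of `G` and every `k ∈ K` with
`v k ≥ γ` there is `g ∈ G` with `v g ≥ γ` and `v (k - g) > γ` (i.e. the inclusion induces
isomorphisms of ribs). -/
def IsImmediateIn {H Γ : Type*} [AddCommGroup H] [LinearOrder Γ] [OrderTop Γ]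
    (v : H → Γ) (G K : Set H) : Prop :=
  (∀ k ∈ K, k ≠ 0 → ∃ g ∈ G, g ≠ 0 ∧ v g = v k) ∧
  (∀ γ : Γ, (∃ g ∈ G, g ≠ 0 ∧ v g = γ) →
    ∀ k ∈ K, γ ≤ v k → ∃ g ∈ G, γ ≤ v g ∧ γ < v (k - g))

/-- Relative pseudo-completeness: every pseudo-Cauchy sequence with entries in `G` which
has a pseudo-limit in `K` already has a pseudo-limit in `G` (all inside the ambient valued
abelian group `(H, v)`). -/
def IsPseudoCompleteIn {H Γ : Type u} [AddCommGroup H] [LinearOrder Γ]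
    (v : H → Γ) (G K : Set H) : Prop :=
  ∀ (I : Type u) [LinearOrder I] [WellFoundedLT I] [NoMaxOrder I] [Nonempty I]
    (a : I → H), (∀ i, a i ∈ G) → IsPseudoCauchy v a →
    (∃ x ∈ K, IsPseudoLimit v a x) → ∃ x ∈ G, IsPseudoLimit v a x

/-- A valued abelian group is pseudo-complete if every pseudo-Cauchy sequence in it
admits a pseudo-limit in it. -/
def IsPseudoComplete {G Γ : Type u} [AddCommGroup G] [LinearOrder Γ] (v : G → Γ) : Prop :=
  ∀ (I : Type u) [LinearOrder I] [WellFoundedLT I] [NoMaxOrder I] [Nonempty I]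
    (a : I → G), IsPseudoCauchy v a → ∃ x : G, IsPseudoLimit v a x

/-- The extension `H/G` is maximal: there is no subgroup `K` with `G ⊊ K ⊆ H` such that
`K/G` is immediate. -/
def IsMaximalIn {H Γ : Type u} [AddCommGroup H] [LinearOrder Γ] [OrderTop Γ]
    (v : H → Γ) (G : AddSubgroup H) : Prop :=
  ∀ K : AddSubgroup H, G < K → ¬ IsImmediateIn v (G : Set H) (K : Set H)

/-- A valued abelian group `(G, v)` is maximal if it admits no proper immediate extension:
whenever `(H, w)` is a valued abelian group (with the same value set, as immediate extensions
preserve the skeleton) and `f : G →+ H` is an injective valuation-preserving homomorphism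
making `H` an immediate extension of the image of `G`, then `f` is surjective. -/
def IsMaximal {G Γ : Type u} [AddCommGroup G] [LinearOrder Γ] [OrderTop Γ]
    (v : G → Γ) : Prop :=
  ∀ (H : Type u) (_ : AddCommGroup H) (w : H → Γ), IsValuedGroup w →
    ∀ f : G →+ H, Function.Injective f → (∀ g : G, w (f g) = v g) →
      IsImmediateIn w (Set.range f) Set.univ → Function.Surjective f

/-!
If `G` is pseudo-complete and `k` lies in an immediate extension of `G` but not in `G`, the values
`v (k - g)`, `g ∈ G`, have no largest element. Along a well-ordered cofinal set of them the
corresponding `g` form a pseudo-Cauchy sequence, and a pseudo-limit `x` of it would satisfy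
`v (k - x) > v (k - x)`.

Conversely, let `a` be pseudo-Cauchy without pseudo-limit in `G`, with `v (a i - a j) = γ i` for
`i < j`. By ℤ-invariance each `g + n • a` with `n ≠ 0` is pseudo-Cauchy with the same `γ`, so
`v (g + n • a i)` is eventually either a constant `< γ i` or equal to `γ i`. The `n` for which
`n • a` has a pseudo-limit form a subgroup `d ℤ`; let `y` be a pseudo-limit of `d • a`. Valuing
`g + n • x` by `v (g + (n / d) • y)` if `d ∣ n`, and by the eventual value of `v (g + n • a i)`
otherwise, gives a pseudo-valuation on `G × ℤ`; the quotient by its kernel is an immediate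
extension of `G`, proper because `d ∤ 1`.
-/

open Filter

def IsZInvariant {G Γ : Type*} [AddCommGroup G] (v : G → Γ) : Prop :=
  ∀ (g : G) (n : ℕ), 0 < n → v (n • g) = v g

structure IsPseudoValuation {H Γ : Type*} [AddCommGroup H] [LinearOrder Γ] [OrderTop Γ]
    (w : H → Γ) : Prop where
  map_zero : w 0 = ⊤
  min_le_sub : ∀ p q : H, min (w p) (w q) ≤ w (p - q)

namespace IsPseudoValuation

variable {H Γ : Type*} [AddCommGroup H] [LinearOrder Γ] [OrderTop Γ] {w : H → Γ}
  (hw : IsPseudoValuation w)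
include hw

lemma map_neg (p : H) : w (-p) = w p := by
  have h₁ := hw.min_le_sub 0 p
  have h₂ := hw.min_le_sub 0 (-p)
  simp only [hw.map_zero, le_top, min_eq_right, zero_sub, neg_neg] at h₁ h₂
  exact le_antisymm h₂ h₁

def ker : AddSubgroup H where
  carrier := {p | w p = ⊤}
  zero_mem' := hw.map_zero
  add_mem' {p q} hp hq := by
    have := hw.min_le_sub p (-q)
    rwa [sub_neg_eq_add, hw.map_neg, Set.mem_ofPred.1 hp, Set.mem_ofPred.1 hq, min_self,
      top_le_iff] at this
  neg_mem' {p} hp := (hw.map_neg p).trans hp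

lemma mem_ker {p : H} : p ∈ hw.ker ↔ w p = ⊤ := Iff.rfl

lemma map_eq_of_sub_mem_ker {p q : H} (h : p - q ∈ hw.ker) : w p = w q := by
  have hqp : w (q - p) = ⊤ := by rw [← neg_sub, hw.map_neg]; exact h
  have h₁ := hw.min_le_sub p (p - q)
  have h₂ := hw.min_le_sub q (q - p)
  rw [hw.mem_ker.1 h, min_top_right, sub_sub_cancel] at h₁
  rw [hqp, min_top_right, sub_sub_cancel] at h₂
  exact le_antisymm h₁ h₂

def lift : H ⧸ hw.ker → Γ :=
  fun x => Quotient.liftOn' x w fun p q hpq => hw.map_eq_of_sub_mem_ker <| by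
    have := hw.ker.neg_mem (QuotientAddGroup.leftRel_apply.1 hpq)
    rwa [neg_add_rev, neg_neg, neg_add_eq_sub] at this

@[simp]
lemma lift_mk (p : H) : hw.lift (p : H ⧸ hw.ker) = w p := rfl

lemma isValuedGroup_lift (hs : Function.Surjective w) : IsValuedGroup hw.lift where
  surjective c := by
    obtain ⟨p, hp⟩ := hs c
    exact ⟨p, hp⟩
  eq_top_iff x := by
    induction x using QuotientAddGroup.induction_on with
    | H p => rw [lift_mk, QuotientAddGroup.eq_zero_iff, mem_ker]
  min_le_sub x y := by
    induction x using QuotientAddGroup.induction_on with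
    | H p =>
      induction y using QuotientAddGroup.induction_on with
      | H q => exact hw.min_le_sub p q

end IsPseudoValuation

namespace IsValuedGroup

variable {G Γ : Type*} [AddCommGroup G] [LinearOrder Γ] [OrderTop Γ] {v : G → Γ}
  (hv : IsValuedGroup v)
include hv

lemma isPseudoValuation : IsPseudoValuation v := ⟨(hv.eq_top_iff 0).2 rfl, hv.min_le_sub⟩

lemma map_zero : v 0 = ⊤ := hv.isPseudoValuation.map_zero

lemma map_neg (g : G) : v (-g) = v g := hv.isPseudoValuation.map_neg g

lemma map_sub_comm (g h : G) : v (g - h) = v (h - g) := by rw [← neg_sub, hv.map_neg]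

lemma min_le_add (g h : G) : min (v g) (v h) ≤ v (g + h) := by
  simpa [hv.map_neg] using hv.min_le_sub g (-h)

lemma map_sub_eq_of_lt {g h : G} (hlt : v g < v h) : v (g - h) = v g := by
  refine le_antisymm ?_ (by simpa [hlt.le] using hv.min_le_sub g h)
  by_contra! hgt
  have := hv.min_le_add (g - h) h
  rw [sub_add_cancel] at this
  exact (lt_min hgt hlt).not_ge this

lemma map_add_eq_of_lt {g h : G} (hlt : v g < v h) : v (g + h) = v g := by
  rw [← sub_neg_eq_add, hv.map_sub_eq_of_lt (by rwa [hv.map_neg])]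

lemma map_zsmul (hinv : IsZInvariant v) {n : ℤ} (hn : n ≠ 0) (g : G) : v (n • g) = v g := by
  rcases Int.natAbs_eq n with h | h <;> rw [h]
  · rw [natCast_zsmul, hinv g _ (Int.natAbs_pos.2 hn)]
  · rw [neg_smul, hv.map_neg, natCast_zsmul, hinv g _ (Int.natAbs_pos.2 hn)]

lemma le_map_zsmul (hinv : IsZInvariant v) (n : ℤ) (g : G) : v g ≤ v (n • g) := by
  rcases eq_or_ne n 0 with rfl | hn
  · simp [hv.map_zero]
  · exact (hv.map_zsmul hinv hn g).ge

lemma isImmediateIn_of_forall_exists {S K : Set G} (h0 : (0 : G) ∈ S)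
    (h : ∀ k ∈ K, k ≠ 0 → ∃ g ∈ S, v g = v k ∧ v k < v (k - g)) : IsImmediateIn v S K := by
  refine ⟨fun k hk hk0 => ?_, ?_⟩
  · obtain ⟨g, hgS, hgk, -⟩ := h k hk hk0
    refine ⟨g, hgS, fun hg0 => hk0 ?_, hgk⟩
    rwa [← hv.eq_top_iff, ← hgk, hv.eq_top_iff]
  · rintro γ ⟨g₀, -, hg₀, rfl⟩ k hk hle
    by_cases hk0 : k = 0
    · refine ⟨0, h0, by simp [hv.map_zero], ?_⟩
      rw [hk0, sub_zero, hv.map_zero, lt_top_iff_ne_top, Ne, hv.eq_top_iff]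
      exact hg₀
    · obtain ⟨g, hgS, hgk, hlt⟩ := h k hk hk0
      exact ⟨g, hgS, hgk ▸ hle, hle.trans_lt hlt⟩

end IsValuedGroup

lemma IsImmediateIn.exists_lt_map_sub {H Γ : Type*} [AddCommGroup H] [LinearOrder Γ]
    [OrderTop Γ] {w : H → Γ} {S K : Set H} (himm : IsImmediateIn w S K) {k : H} (hk : k ∈ K)
    (hk0 : k ≠ 0) : ∃ s ∈ S, w k < w (k - s) := by
  obtain ⟨g, hgS, hg0, hgk⟩ := himm.1 k hk hk0
  obtain ⟨s, hsS, -, hlt⟩ := himm.2 _ ⟨g, hgS, hg0, hgk⟩ k hk le_rfl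
  exact ⟨s, hsS, hlt⟩

lemma exists_subset_isCofinalFor_wellFoundedLT {α : Type*} [LinearOrder α] (s : Set α) :
    ∃ t ⊆ s, IsCofinalFor s t ∧ WellFoundedLT t := by
  let r : α → α → Prop := WellOrderingRel
  have hr : IsWellOrder α r := WellOrderingRel.isWellOrder
  -- the records of `s` for the well-order `r`: on them `<` agrees with `r`
  refine ⟨{a ∈ s | ∀ b ∈ s, r b a → b < a}, fun a ha => ha.1, fun a ha => ?_, ?_⟩
  · obtain ⟨m, ⟨hms, ham⟩, hmin⟩ := hr.wf.has_min {b ∈ s | a ≤ b} ⟨a, ha, le_rfl⟩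
    refine ⟨m, ⟨hms, fun b hb hbm => ?_⟩, ham⟩
    by_contra! hmb
    exact hmin b ⟨hb, ham.trans hmb⟩ hbm
  · refine ⟨Subrelation.wf (r := InvImage r Subtype.val) (fun {x y} hxy => ?_)
      (InvImage.wf _ hr.wf)⟩
    rcases trichotomous_of r x.1 y.1 with h | h | h
    · exact h
    · exact absurd (Subtype.ext h) hxy.ne
    · exact absurd (x.2.2 y y.2.1 h) hxy.not_gt

/-- Here `u g` stands for `v (k - g)`, where `k` lies in an extension of `G` and is approximated
ever better by elements of `G`. -/
lemma not_isPseudoComplete_of_forall_exists_lt {G Γ : Type u} [AddCommGroup G] [LinearOrder Γ]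
    {v : G → Γ} (u : G → Γ) (hsub : ∀ g g', u g < u g' → v (g - g') = u g)
    (hle : ∀ g x, min (u g) (v (g - x)) ≤ u x) (hlt : ∀ g, ∃ g', u g < u g') :
    ¬ IsPseudoComplete v := by
  intro hpc
  obtain ⟨t, hts, hcof, hwf⟩ := exists_subset_isCofinalFor_wellFoundedLT (Set.range u)
  have : NoMaxOrder t := ⟨fun c => by
    obtain ⟨g, hg⟩ := hts c.2
    obtain ⟨g', hg'⟩ := hlt g
    obtain ⟨c', hc't, hc'⟩ := hcof (Set.mem_range_self g')
    exact ⟨⟨c', hc't⟩, show (c : Γ) < c' from hg ▸ hg'.trans_le hc'⟩⟩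
  have : Nonempty t := by
    obtain ⟨c, hc, -⟩ := hcof (Set.mem_range_self 0)
    exact ⟨⟨c, hc⟩⟩
  choose a ha using fun c : t => hts c.2
  have hva : ∀ c c' : t, c < c' → v (a c - a c') = c := fun c c' h => by
    rw [hsub _ _ (by rw [ha, ha]; exact h), ha]
  obtain ⟨x, c₀, hx⟩ := hpc t a ⟨Classical.arbitrary t, fun c c' c'' _ h h' => by
    rw [hva _ _ h, hva _ _ h']
    exact h⟩
  obtain ⟨g', hg'⟩ := hlt x
  obtain ⟨c₁, hc₁t, hc₁⟩ := hcof (Set.mem_range_self g')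
  set c : t := max c₀ ⟨c₁, hc₁t⟩
  obtain ⟨c', hc'⟩ := exists_gt c
  have hcx : (c : Γ) ≤ u x := by
    have := hle (a c) x
    rwa [hx c c' (le_max_left _ _) hc', hva c c' hc', ha, min_self] at this
  exact (hg'.trans_le (hc₁.trans (le_max_right c₀ ⟨c₁, hc₁t⟩))).not_ge hcx

theorem isMaximal_of_isPseudoComplete {G Γ : Type u} [AddCommGroup G] [LinearOrder Γ]
    [OrderTop Γ] {v : G → Γ} (hpc : IsPseudoComplete v) : IsMaximal v := by
  intro H _ w hw f _ hwf himm
  by_contra hsurj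
  obtain ⟨k, hk⟩ := not_forall.1 hsurj
  refine not_isPseudoComplete_of_forall_exists_lt (fun g => w (k - f g))
    (fun g g' h => ?_) (fun g x => ?_) (fun g => ?_) hpc
  · rw [← hwf, map_sub, show f g - f g' = (k - f g') - (k - f g) by abel, hw.map_sub_comm,
      hw.map_sub_eq_of_lt h]
  · rw [← hwf, show k - f x = (k - f g) + f (g - x) by rw [map_sub]; abel]
    exact hw.min_le_add _ _
  · obtain ⟨_, ⟨g', rfl⟩, hlt⟩ := himm.exists_lt_map_sub (Set.mem_univ (k - f g))
      (sub_ne_zero.2 fun h => hk ⟨g, h.symm⟩)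
    exact ⟨g + g', by rwa [map_add, ← sub_sub]⟩

structure IsPseudoCauchyWith {G Γ I : Type*} [AddCommGroup G] [LinearOrder Γ] [Preorder I]
    (v : G → Γ) (a : I → G) (γ : I → Γ) : Prop where
  map_sub : ∀ᶠ i in atTop, ∀ j, i < j → v (a i - a j) = γ i
  strictMono : ∀ᶠ i in atTop, ∀ j, i < j → γ i < γ j

namespace IsPseudoCauchyWith

variable {G Γ I : Type*} [AddCommGroup G] [LinearOrder Γ] {v : G → Γ} [LinearOrder I]
  {a : I → G} {γ : I → Γ}

lemma exists_of_isPseudoCauchy [OrderTop Γ] [NoMaxOrder I] (hv : IsValuedGroup v)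
    (ha : IsPseudoCauchy v a) : ∃ γ, IsPseudoCauchyWith v a γ := by
  obtain ⟨i₀, ha⟩ := ha
  have hfar : ∀ i j k, i₀ ≤ i → i < j → j < k → v (a i - a k) = v (a i - a j) := by
    intro i j k hi hij hjk
    rw [← sub_add_sub_cancel (a i) (a j) (a k)]
    exact hv.map_add_eq_of_lt (ha i j k hi hij hjk)
  have hconst : ∀ i j j', i₀ ≤ i → i < j → i < j' → v (a i - a j) = v (a i - a j') := by
    intro i j j' hi hj hj'
    obtain ⟨k, hk⟩ := exists_gt (max j j')
    rw [← hfar i j k hi hj ((le_max_left _ _).trans_lt hk),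
      hfar i j' k hi hj' ((le_max_right _ _).trans_lt hk)]
  choose next hnext using fun i : I => exists_gt i
  refine ⟨fun i => v (a i - a (next i)), ?_, ?_⟩
  · filter_upwards [eventually_ge_atTop i₀] with i hi j hij
    exact hconst i j _ hi hij (hnext i)
  · filter_upwards [eventually_ge_atTop i₀] with i hi j hij
    rw [hconst i (next i) j hi (hnext i) hij]
    exact ha i j _ hi hij (hnext j)

lemma zsmul_add [OrderTop Γ] (hv : IsValuedGroup v) (hinv : IsZInvariant v)
    (ha : IsPseudoCauchyWith v a γ) {n : ℤ} (hn : n ≠ 0) (g : G) :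
    IsPseudoCauchyWith v (fun i => g + n • a i) γ where
  map_sub := ha.map_sub.mono fun i hi j hij => by
    rw [add_sub_add_left_eq_sub, ← smul_sub, hv.map_zsmul hinv hn, hi j hij]
  strictMono := ha.strictMono

lemma eventually_lt_of_frequently (ha : IsPseudoCauchyWith v a γ) {c : Γ}
    (hc : ∃ᶠ i in atTop, c < γ i) : ∀ᶠ i in atTop, c < γ i := by
  obtain ⟨i₀, hmono, hlt⟩ := (ha.strictMono.and_frequently hc).exists
  filter_upwards [eventually_ge_atTop i₀] with i hi
  rcases hi.eq_or_lt with rfl | hi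
  exacts [hlt, hlt.trans (hmono i hi)]

lemma eventually_eq_of_eventually_le [OrderTop Γ] [NoMaxOrder I] (hv : IsValuedGroup v)
    (ha : IsPseudoCauchyWith v a γ) (hle : ∀ᶠ i in atTop, γ i ≤ v (a i)) :
    ∀ᶠ i in atTop, v (a i) = γ i := by
  filter_upwards [ha.map_sub, ha.strictMono, eventually_forall_ge_atTop.2 hle]
    with i hsub hmono hle'
  obtain ⟨j, hij⟩ := exists_gt i
  refine le_antisymm ?_ (hle' i le_rfl)
  by_contra! hlt
  have := hv.min_le_sub (a i) (a j)
  rw [hsub j hij] at this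
  exact (lt_min hlt ((hmono j hij).trans_le (hle' j hij.le))).not_ge this

lemma eventually_le_or_exists_eventually_eq [OrderTop Γ] [NoMaxOrder I] (hv : IsValuedGroup v)
    (ha : IsPseudoCauchyWith v a γ) :
    (∀ᶠ i in atTop, γ i ≤ v (a i)) ∨ ∃ c, ∀ᶠ i in atTop, v (a i) = c ∧ c < γ i := by
  refine or_iff_not_imp_left.2 fun hle => ?_
  obtain ⟨i₁, ⟨hsub, hmono⟩, hlt⟩ :=
    ((ha.map_sub.and ha.strictMono).and_frequently (not_eventually.1 hle)).exists
  rw [not_le] at hlt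
  refine ⟨v (a i₁), (eventually_gt_atTop i₁).mono fun i hi => ⟨?_, hlt.trans (hmono i hi)⟩⟩
  have := hv.map_sub_eq_of_lt (hlt.trans_eq (hsub i hi).symm)
  rwa [sub_sub_cancel] at this

lemma isPseudoLimit [Nonempty I] (ha : IsPseudoCauchyWith v a γ) {x : G}
    (hx : ∀ᶠ i in atTop, v (a i - x) = γ i) : IsPseudoLimit v a x := by
  obtain ⟨i₀, hi₀⟩ := eventually_atTop.1 (ha.map_sub.and hx)
  exact ⟨i₀, fun i j hi hij => (hi₀ i hi).2.trans ((hi₀ i hi).1 j hij).symm⟩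

end IsPseudoCauchyWith

/-- For `n ≠ 0`, `z` witnesses membership exactly when it is a pseudo-limit of `n • a`
(`IsPseudoCauchyWith.eventually_eq_of_eventually_le`); the inequality also admits `n = 0`. -/
def IsValuedGroup.multiplesWithPseudoLimit {G Γ I : Type*} [AddCommGroup G] [LinearOrder Γ]
    [OrderTop Γ] {v : G → Γ} (hv : IsValuedGroup v) [Preorder I] (a : I → G) (γ : I → Γ) :
    AddSubgroup ℤ where
  carrier := {n | ∃ z, ∀ᶠ i in atTop, γ i ≤ v (n • a i - z)}
  zero_mem' := ⟨0, by simp [hv.map_zero]⟩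
  add_mem' := by
    rintro n₁ n₂ ⟨z₁, h₁⟩ ⟨z₂, h₂⟩
    refine ⟨z₁ + z₂, ?_⟩
    filter_upwards [h₁, h₂] with i hi₁ hi₂
    rw [add_smul, add_sub_add_comm]
    exact (le_min hi₁ hi₂).trans (hv.min_le_add _ _)
  neg_mem' := by
    rintro n ⟨z, h⟩
    refine ⟨-z, h.mono fun i hi => ?_⟩
    rwa [neg_smul, sub_neg_eq_add, neg_add_eq_sub, hv.map_sub_comm]

/-- `adjoinLimitVal v a d y (g, n)` is the value of `g + n • x` for a new pseudo-limit `x` of `a`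
with `d • x = y`: when `d ∤ n`, it is the eventual value of `v (g + n • a i)`. -/
noncomputable def adjoinLimitVal {G Γ I : Type*} [AddCommGroup G] [LinearOrder Γ] [OrderTop Γ]
    [Preorder I] (v : G → Γ) (a : I → G) (d : ℤ) (y : G) (p : G × ℤ) : Γ :=
  if d ∣ p.2 then v (p.1 + (p.2 / d) • y)
  else Classical.epsilon fun c => ∀ᶠ i in atTop, v (p.1 + p.2 • a i) = c

section adjoinLimitVal

variable {G Γ I : Type*} [AddCommGroup G] [LinearOrder Γ] [OrderTop Γ] {v : G → Γ}
  [LinearOrder I] {a : I → G} {d : ℤ} {y : G}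

lemma adjoinLimitVal_of_dvd {p : G × ℤ} (h : d ∣ p.2) :
    adjoinLimitVal v a d y p = v (p.1 + (p.2 / d) • y) :=
  if_pos h

@[simp]
lemma adjoinLimitVal_inl (g : G) : adjoinLimitVal v a d y (g, 0) = v g := by
  simp [adjoinLimitVal_of_dvd]

lemma add_zsmul_eq_of_dvd {p : G × ℤ} (h : d ∣ p.2) (x : G) :
    p.1 + p.2 • x = (p.1 + (p.2 / d) • y) + (p.2 / d) • (d • x - y) := by
  rw [smul_sub, ← mul_smul, Int.ediv_mul_cancel h]
  abel

variable (hv : IsValuedGroup v) (hinv : IsZInvariant v) {γ : I → Γ}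
  (hy : ∀ᶠ i in atTop, γ i ≤ v (d • a i - y)) (hd : ∀ n ∈ hv.multiplesWithPseudoLimit a γ, d ∣ n)
  [NoMaxOrder I] [Nonempty I] (ha : IsPseudoCauchyWith v a γ)
include hv hinv hd ha

lemma eventually_adjoinLimitVal_of_not_dvd {p : G × ℤ} (h : ¬ d ∣ p.2) :
    ∀ᶠ i in atTop, v (p.1 + p.2 • a i) = adjoinLimitVal v a d y p ∧
      adjoinLimitVal v a d y p < γ i := by
  have hn : p.2 ≠ 0 := fun h0 => h (h0 ▸ dvd_zero d)
  obtain hle | ⟨c, hc⟩ := (ha.zsmul_add hv hinv hn p.1).eventually_le_or_exists_eventually_eq hv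
  · refine absurd (hd _ ⟨-p.1, hle.mono fun i hi => ?_⟩) h
    rwa [sub_neg_eq_add, add_comm]
  · have hspec : ∀ᶠ i in atTop, v (p.1 + p.2 • a i) =
        Classical.epsilon fun c => ∀ᶠ i in atTop, v (p.1 + p.2 • a i) = c :=
      Classical.epsilon_spec (p := fun c => ∀ᶠ i in atTop, v (p.1 + p.2 • a i) = c)
        ⟨c, hc.mono fun i hi => hi.1⟩
    obtain ⟨i, h₁, h₂⟩ := (hspec.and hc).exists
    rwa [adjoinLimitVal, if_neg h, ← h₁, h₂.1]

lemma dvd_of_eventually_le_adjoinLimitVal {p : G × ℤ}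
    (h : ∀ᶠ i in atTop, γ i ≤ adjoinLimitVal v a d y p) : d ∣ p.2 := by
  by_contra hnd
  obtain ⟨i, h₁, h₂⟩ := (h.and (eventually_adjoinLimitVal_of_not_dvd hv hinv hd ha hnd)).exists
  exact h₁.not_gt h₂.2

include hy

lemma eventually_min_le_adjoinLimitVal (p : G × ℤ) :
    ∀ᶠ i in atTop, min (adjoinLimitVal v a d y p) (γ i) ≤ v (p.1 + p.2 • a i) := by
  by_cases h : d ∣ p.2
  · filter_upwards [hy] with i hi
    rw [add_zsmul_eq_of_dvd h, adjoinLimitVal_of_dvd h]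
    exact (min_le_min_left _ (hi.trans (hv.le_map_zsmul hinv _ _))).trans (hv.min_le_add _ _)
  · filter_upwards [eventually_adjoinLimitVal_of_not_dvd hv hinv hd ha h] with i hi
    exact hi.1 ▸ min_le_left _ _

lemma le_adjoinLimitVal {p : G × ℤ} {c : Γ} (hc : ∀ᶠ i in atTop, c ≤ γ i)
    (hcp : ∀ᶠ i in atTop, c ≤ v (p.1 + p.2 • a i)) : c ≤ adjoinLimitVal v a d y p := by
  by_cases h : d ∣ p.2
  · obtain ⟨i, hcγ, hcv, hyi⟩ := (hc.and (hcp.and hy)).exists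
    rw [adjoinLimitVal_of_dvd h, eq_sub_of_add_eq (add_zsmul_eq_of_dvd h (a i)).symm]
    exact (le_min hcv (hcγ.trans (hyi.trans (hv.le_map_zsmul hinv _ _)))).trans
      (hv.min_le_sub _ _)
  · obtain ⟨i, h₁, h₂⟩ :=
      ((eventually_adjoinLimitVal_of_not_dvd hv hinv hd ha h).and hcp).exists
    exact h₁.1 ▸ h₂

lemma min_le_adjoinLimitVal_sub (p q : G × ℤ) :
    min (adjoinLimitVal v a d y p) (adjoinLimitVal v a d y q) ≤
      adjoinLimitVal v a d y (p - q) := by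
  set μ := min (adjoinLimitVal v a d y p) (adjoinLimitVal v a d y q) with hμ
  by_cases hle : ∀ᶠ i in atTop, γ i ≤ μ
  · have hp := dvd_of_eventually_le_adjoinLimitVal hv hinv hd ha
      (hle.mono fun i hi => hi.trans (min_le_left _ _))
    have hq := dvd_of_eventually_le_adjoinLimitVal hv hinv hd ha
      (hle.mono fun i hi => hi.trans (min_le_right _ _))
    have e : p.1 - q.1 + (p.2 / d - q.2 / d) • y =
        (p.1 + (p.2 / d) • y) - (q.1 + (q.2 / d) • y) := by
      rw [sub_smul]; abel
    rw [hμ, adjoinLimitVal_of_dvd hp, adjoinLimitVal_of_dvd hq,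
      adjoinLimitVal_of_dvd (dvd_sub hp hq), Prod.fst_sub, Prod.snd_sub,
      Int.sub_ediv_of_dvd _ hq, e]
    exact hv.min_le_sub _ _
  · have hμγ : ∀ᶠ i in atTop, μ ≤ γ i :=
      (ha.eventually_lt_of_frequently ((not_eventually.1 hle).mono fun i hi => not_le.1 hi)).mono
        fun i hi => hi.le
    refine le_adjoinLimitVal hv hinv hy hd ha hμγ ?_
    filter_upwards [hμγ, eventually_min_le_adjoinLimitVal hv hinv hy hd ha p,
      eventually_min_le_adjoinLimitVal hv hinv hy hd ha q] with i hi hp hq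
    rw [Prod.fst_sub, Prod.snd_sub, sub_smul, sub_add_sub_comm]
    exact (le_min ((le_min (min_le_left _ _) hi).trans hp)
      ((le_min (min_le_right _ _) hi).trans hq)).trans (hv.min_le_sub _ _)

lemma isPseudoValuation_adjoinLimitVal : IsPseudoValuation (adjoinLimitVal v a d y) where
  map_zero := (adjoinLimitVal_inl 0).trans hv.map_zero
  min_le_sub := min_le_adjoinLimitVal_sub hv hinv hy hd ha

lemma exists_map_eq_adjoinLimitVal_lt {p : G × ℤ} (hp : adjoinLimitVal v a d y p ≠ ⊤) :
    ∃ g, v g = adjoinLimitVal v a d y p ∧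
      adjoinLimitVal v a d y p < adjoinLimitVal v a d y (p - (g, 0)) := by
  by_cases h : d ∣ p.2
  · refine ⟨p.1 + (p.2 / d) • y, (adjoinLimitVal_of_dvd h).symm, ?_⟩
    rw [adjoinLimitVal_of_dvd (p := p - _) (by simpa using h)]
    simpa [hv.map_zero, lt_top_iff_ne_top] using hp
  · have hn : p.2 ≠ 0 := fun h0 => h (h0 ▸ dvd_zero d)
    obtain ⟨i₁, hi₁, hsub, hmono⟩ := ((eventually_adjoinLimitVal_of_not_dvd hv hinv hd ha h).and
      (ha.map_sub.and ha.strictMono)).exists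
    refine ⟨p.1 + p.2 • a i₁, hi₁.1, hi₁.2.trans_le (le_adjoinLimitVal hv hinv hy hd ha ?_ ?_)⟩
    · filter_upwards [eventually_gt_atTop i₁] with i hi using (hmono i hi).le
    · filter_upwards [eventually_gt_atTop i₁] with i hi
      have e : p.1 - (p.1 + p.2 • a i₁) + (p.2 - 0) • a i = p.2 • (a i - a i₁) := by
        rw [sub_zero, smul_sub]; abel
      rw [Prod.fst_sub, Prod.snd_sub, e, hv.map_zsmul hinv hn, hv.map_sub_comm, hsub i hi]

end adjoinLimitVal

theorem not_isMaximal_of_not_dvd_one {G Γ : Type u} {I : Type*} [AddCommGroup G]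
    [LinearOrder Γ] [OrderTop Γ] {v : G → Γ} (hv : IsValuedGroup v) (hinv : IsZInvariant v)
    [LinearOrder I] [NoMaxOrder I] [Nonempty I] {a : I → G} {γ : I → Γ} {d : ℤ} {y : G}
    (hy : ∀ᶠ i in atTop, γ i ≤ v (d • a i - y)) (hd : ∀ n ∈ hv.multiplesWithPseudoLimit a γ, d ∣ n)
    (ha : IsPseudoCauchyWith v a γ) (hd₁ : ¬ d ∣ 1) : ¬ IsMaximal v := by
  have hw := isPseudoValuation_adjoinLimitVal hv hinv hy hd ha
  let f : G →+ (G × ℤ) ⧸ hw.ker := (QuotientAddGroup.mk' hw.ker).comp (AddMonoidHom.inl G ℤ)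
  have hwf : ∀ g, hw.lift (f g) = v g := fun g => adjoinLimitVal_inl (a := a) g
  have hf : Function.Injective f := (injective_iff_map_eq_zero f).2 fun g hg => by
    rw [← hv.eq_top_iff, ← hwf, hg, ← QuotientAddGroup.mk_zero, hw.lift_mk, hw.map_zero]
  have hw' : IsValuedGroup hw.lift := hw.isValuedGroup_lift fun c => by
    obtain ⟨g, rfl⟩ := hv.surjective c
    exact ⟨(g, 0), adjoinLimitVal_inl (a := a) g⟩
  have himm : IsImmediateIn hw.lift (Set.range f) Set.univ := by
    refine hw'.isImmediateIn_of_forall_exists ⟨0, map_zero f⟩ fun k _ hk0 => ?_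
    induction k using QuotientAddGroup.induction_on with
    | H p =>
      have hp : adjoinLimitVal v a d y p ≠ ⊤ := fun h =>
        hk0 ((QuotientAddGroup.eq_zero_iff p).2 (hw.mem_ker.2 h))
      obtain ⟨g, hg, hlt⟩ := exists_map_eq_adjoinLimitVal_lt hv hinv hy hd ha hp
      exact ⟨f g, ⟨g, rfl⟩, (hwf g).trans hg, hlt⟩
  intro hmax
  obtain ⟨g, hg⟩ := hmax _ _ _ hw' f hf hwf himm ((0, 1) : G × ℤ)
  have htop : (-g, (1 : ℤ)) ∈ hw.ker := by simpa using QuotientAddGroup.eq.1 hg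
  exact hd₁ <| dvd_of_eventually_le_adjoinLimitVal hv hinv hd ha (p := (-g, 1))
    (Eventually.of_forall fun i => hw.mem_ker.1 htop ▸ le_top)

theorem IsPseudoCauchyWith.not_isMaximal {G Γ : Type u} {I : Type*} [AddCommGroup G]
    [LinearOrder Γ] [OrderTop Γ] {v : G → Γ} (hv : IsValuedGroup v) (hinv : IsZInvariant v)
    [LinearOrder I] [NoMaxOrder I] [Nonempty I] {a : I → G} {γ : I → Γ}
    (ha : IsPseudoCauchyWith v a γ) (hno : ∀ x, ¬ IsPseudoLimit v a x) : ¬ IsMaximal v := by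
  obtain ⟨d, hD⟩ := Int.subgroup_cyclic (hv.multiplesWithPseudoLimit a γ)
  have hmem : ∀ n, n ∈ hv.multiplesWithPseudoLimit a γ ↔ d ∣ n := fun n => by
    rw [hD, ← AddSubgroup.zmultiples_eq_closure, Int.mem_zmultiples_iff]
  obtain ⟨y, hy⟩ := (hmem d).2 dvd_rfl
  refine not_isMaximal_of_not_dvd_one hv hinv hy (fun n => (hmem n).1) ha fun hd₁ => ?_
  obtain ⟨z, hz⟩ := (hmem 1).2 hd₁
  have hlim := (ha.zsmul_add hv hinv one_ne_zero (-z)).eventually_eq_of_eventually_le hv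
    (hz.mono fun i hi => by rwa [one_smul, neg_add_eq_sub, ← one_smul ℤ (a i)])
  exact hno z (ha.isPseudoLimit (hlim.mono fun i hi => by rwa [one_smul, neg_add_eq_sub] at hi))

theorem isPseudoComplete_of_isMaximal {G Γ : Type u} [AddCommGroup G] [LinearOrder Γ]
    [OrderTop Γ] {v : G → Γ} (hv : IsValuedGroup v) (hinv : IsZInvariant v)
    (hmax : IsMaximal v) : IsPseudoComplete v := by
  intro I _ _ _ _ a ha
  by_contra! hno
  obtain ⟨γ, hγ⟩ := IsPseudoCauchyWith.exists_of_isPseudoCauchy hv ha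
  exact hγ.not_isMaximal hv hinv hno hmax

/-- A ℤ-invariant valued abelian group `G` is maximal if and only if it
is pseudo-complete. -/
theorem maximal_iff_pseudoComplete {G Γ : Type u} [AddCommGroup G] [LinearOrder Γ]
    [OrderTop Γ] (v : G → Γ) (hv : IsValuedGroup v)
    (hinv : ∀ (g : G) (n : ℕ), 0 < n → v (n • g) = v g) :
    IsMaximal v ↔ IsPseudoComplete v :=
  ⟨isPseudoComplete_of_isMaximal hv hinv, isMaximal_of_isPseudoComplete⟩
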